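/- Let ε ∈ (0,1/2), let p ∈ [ε, 1−ε], and let X be a real-valued random variable such that X and −X have the same distribution (X is symmetric) and |X| ≤ M almost surely for some M > 0. Then E[log(p + (1−p)·exp(X))] ≥ E[log(ε + (1−ε)·exp(X))], i.e., Δ(p,X) ≥ Δ(ε,X). -/

import Mathlib

/-!
Since `(q + (1 - q) eˣ)(q + (1 - q) e⁻ˣ) = 1 + 2 q (1 - q) (cosh x - 1)`, the symmetrized
integrand `log (q + (1 - q) eˣ) + log (q + (1 - q) e⁻ˣ)` is increasing in `q (1 - q)`, and
`ε (1 - ε) ≤ p (1 - p)` for `p ∈ [ε, 1 - ε]`. Integrating against the law of `X`, which is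
invariant under negation, turns this pointwise inequality into the claim. For `0 < q < 1` the
integrands differ from `max x 0` by a bounded amount, so they are integrable for the same laws;
when they are not, both integrals vanish.
-/

open MeasureTheory Real

noncomputable def logMixExp (q x : ℝ) : ℝ := log (q + (1 - q) * exp x)

section LogMixExp

variable {q r : ℝ}

lemma mix_exp_pos (h0 : 0 ≤ q) (h1 : q ≤ 1) (x : ℝ) : 0 < q + (1 - q) * exp x := by
  rcases h0.lt_or_eq with h0 | rfl
  · exact add_pos_of_pos_of_nonneg h0 (mul_nonneg (sub_nonneg.2 h1) (exp_pos x).le)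
  · simpa using exp_pos x

lemma continuous_logMixExp (h0 : 0 ≤ q) (h1 : q ≤ 1) : Continuous (logMixExp q) :=
  Continuous.log (by fun_prop) fun x => (mix_exp_pos h0 h1 x).ne'

lemma mix_exp_mul_mix_exp_neg (q x : ℝ) :
    (q + (1 - q) * exp x) * (q + (1 - q) * exp (-x)) = 1 + 2 * (q * (1 - q)) * (cosh x - 1) := by
  rw [cosh_eq, exp_neg]
  field_simp
  ring

lemma logMixExp_add_logMixExp_neg_le (hq0 : 0 ≤ q) (hq1 : q ≤ 1) (hr0 : 0 ≤ r) (hr1 : r ≤ 1)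
    (hqr : q * (1 - q) ≤ r * (1 - r)) (x : ℝ) :
    logMixExp q x + logMixExp q (-x) ≤ logMixExp r x + logMixExp r (-x) := by
  simp only [logMixExp]
  rw [← log_mul (mix_exp_pos hq0 hq1 x).ne' (mix_exp_pos hq0 hq1 (-x)).ne',
    ← log_mul (mix_exp_pos hr0 hr1 x).ne' (mix_exp_pos hr0 hr1 (-x)).ne',
    mix_exp_mul_mix_exp_neg, mix_exp_mul_mix_exp_neg]
  have hcosh : 0 ≤ cosh x - 1 := sub_nonneg.2 (one_le_cosh x)
  gcongr

lemma abs_logMixExp_sub_max_le (h0 : 0 < q) (h1 : q < 1) (x : ℝ) :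
    |logMixExp q x - max x 0| ≤ -log (min q (1 - q)) := by
  have hmin : 0 < min q (1 - q) := lt_min h0 (by linarith)
  have hupper : q + (1 - q) * exp x ≤ exp (max x 0) := by
    rcases le_total x 0 with hx | hx
    · rw [max_eq_right hx, exp_zero]
      nlinarith [exp_le_one_iff.2 hx]
    · rw [max_eq_left hx]
      nlinarith [one_le_exp hx]
  have hlower : min q (1 - q) * exp (max x 0) ≤ q + (1 - q) * exp x := by
    rcases le_total x 0 with hx | hx
    · rw [max_eq_right hx, exp_zero, mul_one]
      nlinarith [min_le_left q (1 - q), exp_pos x]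
    · rw [max_eq_left hx]
      nlinarith [min_le_right q (1 - q), exp_pos x]
  have hlog_min : log (min q (1 - q)) ≤ 0 := log_nonpos hmin.le ((min_le_left _ _).trans h1.le)
  have hle := log_le_log (mix_exp_pos h0.le h1.le x) hupper
  have hge := log_le_log (by positivity) hlower
  rw [log_exp] at hle
  rw [log_mul hmin.ne' (exp_pos _).ne', log_exp] at hge
  rw [abs_le, logMixExp]
  constructor <;> linarith

lemma integrable_logMixExp_of_integrable {ν : Measure ℝ} [IsFiniteMeasure ν]
    (hq0 : 0 < q) (hq1 : q < 1) (hr0 : 0 < r) (hr1 : r < 1)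
    (h : Integrable (logMixExp q) ν) : Integrable (logMixExp r) ν := by
  have hdiff : Integrable (fun x => logMixExp r x - logMixExp q x) ν := by
    refine Integrable.of_bound (((continuous_logMixExp hr0.le hr1.le).sub
      (continuous_logMixExp hq0.le hq1.le)).aestronglyMeasurable)
      (-log (min r (1 - r)) + -log (min q (1 - q))) (ae_of_all _ fun x => ?_)
    rw [Real.norm_eq_abs, ← sub_sub_sub_cancel_right _ _ (max x 0)]
    exact (abs_sub _ _).trans
      (add_le_add (abs_logMixExp_sub_max_le hr0 hr1 x) (abs_logMixExp_sub_max_le hq0 hq1 x))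
  refine (h.add hdiff).congr (ae_of_all _ fun x => ?_)
  simp only [Pi.add_apply]
  ring

end LogMixExp

lemma two_mul_integral_eq_integral_add_comp_neg {G : Type*} [MeasurableSpace G] [AddGroup G]
    [MeasurableNeg G] {ν : Measure G} [ν.IsNegInvariant] {f : G → ℝ} (hf : Integrable f ν) :
    2 * ∫ x, f x ∂ν = ∫ x, (f x + f (-x)) ∂ν := by
  rw [integral_add hf hf.comp_neg, integral_neg_eq_self]
  ring

theorem integral_logMixExp_le {ν : Measure ℝ} [IsFiniteMeasure ν] [ν.IsNegInvariant] {ε p : ℝ}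
    (hε : 0 < ε) (hεp : ε ≤ p) (hp : p ≤ 1 - ε) :
    ∫ x, logMixExp ε x ∂ν ≤ ∫ x, logMixExp p x ∂ν := by
  have hp1 : p < 1 := by linarith
  have hε1 : ε < 1 := by linarith
  by_cases hpint : Integrable (logMixExp p) ν
  · have hεint := integrable_logMixExp_of_integrable (hε.trans_le hεp) hp1 hε hε1 hpint
    have hvar : ε * (1 - ε) ≤ p * (1 - p) := by nlinarith
    suffices 2 * ∫ x, logMixExp ε x ∂ν ≤ 2 * ∫ x, logMixExp p x ∂ν by linarith
    rw [two_mul_integral_eq_integral_add_comp_neg hεint,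
      two_mul_integral_eq_integral_add_comp_neg hpint]
    exact integral_mono (hεint.add hεint.comp_neg) (hpint.add hpint.comp_neg)
      (logMixExp_add_logMixExp_neg_le hε.le hε1.le (hε.le.trans hεp) hp1.le hvar)
  · have hεint : ¬Integrable (logMixExp ε) ν := fun h =>
      hpint (integrable_logMixExp_of_integrable hε hε1 (hε.trans_le hεp) hp1 h)
    rw [integral_undef hpint, integral_undef hεint]

theorem delta_ge_delta_eps_general
    {Ω : Type*} [MeasurableSpace Ω] (μ : Measure Ω) [IsProbabilityMeasure μ]
    (X : Ω → ℝ) (hXmeas : Measurable X)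
    (ε p : ℝ) (hε : ε ∈ Set.Ioo (0 : ℝ) (1 / 2)) (hp : p ∈ Set.Icc ε (1 - ε))
    (hsym : μ.map X = μ.map (fun ω => -X ω)) :
    ∫ ω, Real.log (ε + (1 - ε) * Real.exp (X ω)) ∂μ
      ≤ ∫ ω, Real.log (p + (1 - p) * Real.exp (X ω)) ∂μ := by
  have : (μ.map X).IsNegInvariant :=
    ⟨by rw [Measure.neg, Measure.map_map measurable_neg hXmeas]; exact hsym.symm⟩
  have hε1 : ε ≤ 1 := by linarith [hε.2]
  show ∫ ω, logMixExp ε (X ω) ∂μ ≤ ∫ ω, logMixExp p (X ω) ∂μ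
  rw [← integral_map hXmeas.aemeasurable (continuous_logMixExp hε.1.le hε1).aestronglyMeasurable,
    ← integral_map hXmeas.aemeasurable
      (continuous_logMixExp (hε.1.le.trans hp.1) (by linarith [hp.2, hε.1])).aestronglyMeasurable]
  exact integral_logMixExp_le hε.1 hp.1 hp.2

/-- For `ε ∈ (0,1/2)`, `p ∈ [ε, 1-ε]` and a symmetric real random variable `X`
bounded by `M > 0` almost surely, `Δ(p,X) ≥ Δ(ε,X)`, i.e. on `[ε, 1-ε]` the
renormalizing term's mean is minimized at the endpoints. -/
theorem delta_ge_delta_eps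
    {Ω : Type*} [MeasurableSpace Ω] (μ : Measure Ω) [IsProbabilityMeasure μ]
    (X : Ω → ℝ) (hXmeas : Measurable X)
    (ε p M : ℝ) (hε : ε ∈ Set.Ioo (0 : ℝ) (1 / 2)) (hp : p ∈ Set.Icc ε (1 - ε))
    (hM : 0 < M)
    (hsym : μ.map X = μ.map (fun ω => -X ω))
    (hbdd : ∀ᵐ ω ∂μ, |X ω| ≤ M) :
    ∫ ω, Real.log (ε + (1 - ε) * Real.exp (X ω)) ∂μ
      ≤ ∫ ω, Real.log (p + (1 - p) * Real.exp (X ω)) ∂μ :=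
  delta_ge_delta_eps_general μ X hXmeas ε p hε hp hsym
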